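/- arXiv:2208.12465 — 2 statements merged into one kernel-verified Lean document; each statement's English description precedes it below -/
import Mathlib

section
/- Let γ: Q → T*Q be a one-form on Q and λ = γ∘π_Q: T*Q → T*Q. Then: (i) for any x, y ∈ TQ, (γ*ω)(x, y) = −dγ(x, y), and for any v, w ∈ TT*Q, (λ*ω)(v, w) = −dγ(Tπ_Q(v), Tπ_Q(w)); (ii) for any v, w ∈ TT*Q, ω(Tλ·v, w) = ω(v, w − Tλ·w) − dγ(Tπ_Q(v), Tπ_Q(w)). -/
/-!
Key lemma (Wang, Lemma 2.3) on the pullback of the canonical symplectic form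
by a one-form `γ : Q → T*Q` and by `λ = γ ∘ π_Q`, in the trivialized model of
the cotangent bundle of a normed space.
-/

noncomputable section

/-- Trivialized local model of the cotangent bundle `T*Q` of a normed space `Q`. -/
abbrev Cot (Q : Type*) [NormedAddCommGroup Q] [NormedSpace ℝ Q] := Q × (Q →L[ℝ] ℝ)

variable {Q : Type*} [NormedAddCommGroup Q] [NormedSpace ℝ Q]

/-- The canonical symplectic form `ω` on `T*Q` (constant in the trivialized model). -/
def omegaCan (v w : Cot Q) : ℝ := w.2 v.1 - v.2 w.1

/-- The canonical projection `π_Q : T*Q → Q`. -/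
def piQ : Cot Q → Q := Prod.fst

/-- `Tπ_Q : T(T*Q) → TQ` in the trivialized tangent-bundle model. -/
def TpiQ : Cot Q × Cot Q → Q × Q := fun p => (p.1.1, p.2.1)

/-- The exterior differential of a one-form `γ : Q → T*Q` evaluated at `q` on
two tangent vectors. -/
def dOneForm (γ : Q → Cot Q) (q : Q) (x y : Q) : ℝ :=
  (fderiv ℝ γ q x).2 y - (fderiv ℝ γ q y).2 x

/-- **Lemma** (Wang).  Let `γ : Q → T*Q` be a one-form and `λ = γ ∘ π_Q : T*Q → T*Q`.
Then:
(i) `γ*ω (x,y) = - dγ(x,y)` for tangent vectors `x, y` on `Q`, and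
    `λ*ω (v,w) = - dγ(Tπ_Q v, Tπ_Q w)` for tangent vectors `v, w` on `T*Q`;
(ii) `ω(Tλ·v, w) = ω(v, w - Tλ·w) - dγ(Tπ_Q v, Tπ_Q w)`. -/
theorem one_form_pullback_lemma
    (γ : Q → Cot Q) (hγsec : ∀ q, (γ q).1 = q) (hγsm : ContDiff ℝ (⊤ : ℕ∞) γ) :
    ((∀ (q : Q) (x y : Q),
        omegaCan (fderiv ℝ γ q x) (fderiv ℝ γ q y) = - dOneForm γ q x y) ∧
      (∀ z v w : Cot Q,
        omegaCan (fderiv ℝ (fun z : Cot Q => γ (piQ z)) z v)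
            (fderiv ℝ (fun z : Cot Q => γ (piQ z)) z w)
          = - dOneForm γ (piQ z) (TpiQ (z, v)).2 (TpiQ (z, w)).2)) ∧
    (∀ z v w : Cot Q,
        omegaCan (fderiv ℝ (fun z : Cot Q => γ (piQ z)) z v) w
          = omegaCan v (w - fderiv ℝ (fun z : Cot Q => γ (piQ z)) z w)
            - dOneForm γ (piQ z) (TpiQ (z, v)).2 (TpiQ (z, w)).2) := by
  have hdiff : Differentiable ℝ γ := hγsm.differentiable (by simp)
  -- first component of the derivative of γ is the identity
  have hfst : ∀ (q : Q) (x : Q), (fderiv ℝ γ q x).1 = x := by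
    intro q x
    have h1 : (fun q : Q => (γ q).1) = id := funext hγsec
    have h2 := (ContinuousLinearMap.fst ℝ Q (Q →L[ℝ] ℝ)).hasFDerivAt.comp q
      (hdiff q).hasFDerivAt
    have h3 : HasFDerivAt (id : Q → Q)
        ((ContinuousLinearMap.fst ℝ Q (Q →L[ℝ] ℝ)).comp (fderiv ℝ γ q)) q := by
      simpa [← h1, Function.comp_def] using h2
    have h4 := h3.unique (hasFDerivAt_id q)
    have h5 := ContinuousLinearMap.ext_iff.mp h4 x
    simpa using h5
  -- derivative of λ = γ ∘ piQ
  have hlam : ∀ (z v : Cot Q),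
      fderiv ℝ (fun z : Cot Q => γ (piQ z)) z v = fderiv ℝ γ z.1 v.1 := by
    intro z v
    have := (((hdiff z.1).hasFDerivAt).comp z (hasFDerivAt_fst (p := z))).fderiv
    simp only [Function.comp_def, piQ] at this ⊢
    rw [this]; rfl
  refine ⟨⟨?_, ?_⟩, ?_⟩
  · intro q x y
    simp only [omegaCan, dOneForm, hfst]
    ring
  · intro z v w
    rw [hlam z v, hlam z w]
    simp only [omegaCan, dOneForm, hfst, TpiQ, piQ]
    ring
  · intro z v w
    rw [hlam z v, hlam z w]
    simp only [omegaCan, dOneForm, hfst, TpiQ, piQ, Prod.snd_sub, Prod.fst_sub,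
      ContinuousLinearMap.sub_apply]
    simp only [sub_self, map_zero]
    ring
end
end

section
/- Let γ: Q → T*Q be a one-form on Q and λ = γ∘π_Q: T*Q → T*Q, and let ω^B = ω − π_Q*B be the magnetic symplectic form on T*Q, where ω is the canonical symplectic form and B is a closed two-form on Q. Then: (i) for any v, w ∈ TT*Q, (λ*ω^B)(v, w) = −(dγ + B)(Tπ_Q(v), Tπ_Q(w)); (ii) for any v, w ∈ TT*Q, ω^B(Tλ·v, w) = ω^B(v, w − Tλ·w) − (dγ + B)(Tπ_Q(v), Tπ_Q(w)). -/
/-!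
Key lemma on the magnetic symplectic form (Wang, Lemma 7.2), in the
trivialized model of the cotangent bundle of a normed space.
-/

noncomputable section

variable {Q : Type*} [NormedAddCommGroup Q] [NormedSpace ℝ Q]

/-- The magnetic symplectic form `ω^B = ω - π_Q* B` on `T*Q`, for a two-form
`B` on `Q`. -/
def omegaB (B : Q → Q →L[ℝ] Q →L[ℝ] ℝ) (z : Cot Q) (v w : Cot Q) : ℝ :=
  omegaCan v w - B z.1 v.1 w.1

/-- `B` is a closed two-form on `Q` (alternating, and `dB = 0`). -/
def IsClosedTwoForm (B : Q → Q →L[ℝ] Q →L[ℝ] ℝ) : Prop :=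
  (∀ q x y, B q x y = - B q y x) ∧
  (∀ q x y z, fderiv ℝ B q x y z + fderiv ℝ B q y z x + fderiv ℝ B q z x y = 0)

/-- **Lemma** (Wang).  For a one-form `γ : Q → T*Q`, `λ = γ ∘ π_Q` and the
magnetic symplectic form `ω^B = ω - π_Q*B`:
(i)  `λ*ω^B (v,w) = -(dγ + B)(Tπ_Q v, Tπ_Q w)`;
(ii) `ω^B(Tλ·v, w) = ω^B(v, w - Tλ·w) - (dγ + B)(Tπ_Q v, Tπ_Q w)`. -/
theorem magnetic_one_form_pullback_lemma
    (B : Q → Q →L[ℝ] Q →L[ℝ] ℝ) (hB : IsClosedTwoForm B)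
    (hBsm : ContDiff ℝ (⊤ : ℕ∞) B)
    (γ : Q → Cot Q) (hγsec : ∀ q, (γ q).1 = q) (hγsm : ContDiff ℝ (⊤ : ℕ∞) γ) :
    (∀ z v w : Cot Q,
      omegaB B (γ (piQ z)) (fderiv ℝ (fun z : Cot Q => γ (piQ z)) z v)
          (fderiv ℝ (fun z : Cot Q => γ (piQ z)) z w)
        = - (dOneForm γ (piQ z) (TpiQ (z, v)).2 (TpiQ (z, w)).2
            + B (piQ z) (TpiQ (z, v)).2 (TpiQ (z, w)).2)) ∧
    (∀ z v w : Cot Q,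
      omegaB B z (fderiv ℝ (fun z : Cot Q => γ (piQ z)) z v) w
        = omegaB B z v (w - fderiv ℝ (fun z : Cot Q => γ (piQ z)) z w)
          - (dOneForm γ (piQ z) (TpiQ (z, v)).2 (TpiQ (z, w)).2
            + B (piQ z) (TpiQ (z, v)).2 (TpiQ (z, w)).2)) := by
  have hγd : ∀ q, DifferentiableAt ℝ γ q := fun q => (hγsm.differentiable (by simp)) q
  -- derivative of λ = γ ∘ π_Q
  have hD : ∀ (z v : Cot Q),
      fderiv ℝ (fun z : Cot Q => γ (piQ z)) z v = fderiv ℝ γ z.1 v.1 := by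
    intro z v
    have h : fderiv ℝ (fun z : Cot Q => γ (piQ z)) z
        = (fderiv ℝ γ z.1).comp (ContinuousLinearMap.fst ℝ Q (Q →L[ℝ] ℝ)) := by
      have := fderiv_comp (𝕜 := ℝ) z (hγd z.1) (differentiableAt_fst (p := z))
      simpa [Function.comp_def, piQ, fderiv_fst] using this
    rw [h]; rfl
  have hD' : ∀ (z v : Cot Q),
      fderiv ℝ (fun z : Cot Q => γ z.1) z v = fderiv ℝ γ z.1 v.1 := fun z v => hD z v
  -- first component of the derivative of a section
  have h1 : ∀ (q : Q) (x : Q), (fderiv ℝ γ q x).1 = x := by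
    intro q x
    have h : fderiv ℝ (fun q => (γ q).1) q = ContinuousLinearMap.id ℝ Q := by
      have heq : (fun q => (γ q).1) = fun q : Q => q := funext hγsec
      rw [heq, fderiv_id']
    have h2 : fderiv ℝ (fun q => (γ q).1) q
        = (ContinuousLinearMap.fst ℝ Q (Q →L[ℝ] ℝ)).comp (fderiv ℝ γ q) := by
      have := fderiv_comp (𝕜 := ℝ) q (differentiableAt_fst (p := γ q)) (hγd q)
      simpa [Function.comp_def, fderiv_fst] using this
    have := h2.symm.trans h
    calc (fderiv ℝ γ q x).1
        = ((ContinuousLinearMap.fst ℝ Q (Q →L[ℝ] ℝ)).comp (fderiv ℝ γ q)) x := rfl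
      _ = (ContinuousLinearMap.id ℝ Q) x := by rw [this]
      _ = x := rfl
  constructor
  · intro z v w
    simp only [hD, omegaB, omegaCan, dOneForm, piQ, TpiQ, h1]
    simp only [hD', h1, hγsec]
    ring
  · intro z v w
    simp only [hD, omegaB, omegaCan, dOneForm, piQ, TpiQ, h1, Prod.snd_sub,
      Prod.fst_sub, sub_self, map_zero, ContinuousLinearMap.sub_apply,
      ContinuousLinearMap.zero_apply]
    simp only [hD', h1, Prod.snd_sub, Prod.fst_sub, sub_self, map_zero,
      ContinuousLinearMap.sub_apply, ContinuousLinearMap.zero_apply]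
    ring
end
end
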